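/- Let x = (x_1, x_2, …) be a G-virtual permutation, i.e. x_n ∈ G≀S(n) and p_{n,n+1}(x_{n+1}) = x_n for all n ≥ 1. Fix m ≥ 1, elements w_1, w_2 ∈ G≀S(m), and l ∈ {1,…,k}. Then the integer [ι_{m,n}(w_2)^{-1}·x_n·ι_{m,n}(w_1)]_{c_l} − [x_n]_{c_l} is the same for all n ≥ m. (These common values define the k fundamental cocycles C_l(x,W), W = (w_1,w_2), of the dynamical system (𝔖_G, G_∞ × G_∞).) -/

import Mathlib

namespace WreathPaper

/-- The permutation action of `S(n)` on `G^n`. -/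
def permAut (G : Type*) [Group G] (n : ℕ) : Equiv.Perm (Fin n) →* MulAut (Fin n → G) where
  toFun s :=
    { toFun := fun g => g ∘ s.symm
      invFun := fun g => g ∘ s
      left_inv := fun g => funext fun i => by simp
      right_inv := fun g => funext fun i => by simp
      map_mul' := fun g h => rfl }
  map_one' := by ext g i; rfl
  map_mul' := fun s t => by ext g i; rfl

/-- The wreath product `G ≀ S(n)`: underlying set `G^n × S(n)` with
`((g₁,…,gₙ),s)·((h₁,…,hₙ),t) = ((g₁h_{s⁻¹(1)},…,g_nh_{s⁻¹(n)}), st)`. -/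
abbrev WP (G : Type*) [Group G] (n : ℕ) :=
  SemidirectProduct (Fin n → G) (Equiv.Perm (Fin n)) (permAut G n)

namespace WP

variable {G : Type*} [Group G] {n : ℕ}

def wpEquivProd (G : Type*) [Group G] (n : ℕ) :
    WP G n ≃ (Fin n → G) × Equiv.Perm (Fin n) where
  toFun x := (x.left, x.right)
  invFun p := ⟨p.1, p.2⟩
  left_inv x := rfl
  right_inv p := rfl

instance [Fintype G] : Fintype (WP G n) := Fintype.ofEquiv _ (wpEquivProd G n).symm
instance [DecidableEq G] : DecidableEq (WP G n) := (wpEquivProd G n).decidableEq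

/-- The cycle-product of `x = ((g₁,…,gₙ),s)` corresponding to the cycle of `s`
containing `i` (computed starting at `i`): `g_{s^{r-1}(i)} ⋯ g_{s(i)} g_i`. -/
noncomputable def cycleProd (x : WP G n) (i : Fin n) : G :=
  (((List.range (Function.minimalPeriod (⇑x.right) i)).reverse).map
    fun j => x.left ((x.right ^ j) i)).prod

/-- `[x]_c`: the number of cycles of `x` whose cycle-product lies in `c`
(cycles are counted via their minimal representative). -/
noncomputable def cycleCount (x : WP G n) (c : Set G) : ℕ :=
  Nat.card {i : Fin n // (∀ m : ℕ, i ≤ (x.right ^ m) i) ∧ cycleProd x i ∈ c}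

/-- The number of cycles of `x` of length `j` whose cycle-product lies in `c`. -/
noncomputable def cycleCountLen (x : WP G n) (c : Set G) (j : ℕ) : ℕ :=
  Nat.card {i : Fin n // (∀ m : ℕ, i ≤ (x.right ^ m) i) ∧
    Function.minimalPeriod (⇑x.right) i = j ∧ cycleProd x i ∈ c}

/-- Removing the point `n+1` from a permutation of `{1,…,n+1}`. -/
def projPerm (s : Equiv.Perm (Fin (n + 1))) : Equiv.Perm (Fin n) :=
  Equiv.removeNone (finSuccEquivLast.symm.trans (s.trans finSuccEquivLast))

/-- The canonical projection `p_{n,n+1} : G ≀ S(n+1) → G ≀ S(n)`. -/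
def proj (x : WP G (n + 1)) : WP G n :=
  ⟨fun i => if x.right (Fin.last n) = Fin.castSucc i
      then x.left (Fin.castSucc i) * x.left (Fin.last n)
      else x.left (Fin.castSucc i),
    projPerm x.right⟩

def castEquiv {m n : ℕ} (h : m ≤ n) : Fin m ≃ {i : Fin n // (i : ℕ) < m} where
  toFun i := ⟨⟨(i : ℕ), lt_of_lt_of_le i.isLt h⟩, i.isLt⟩
  invFun i := ⟨(i.1 : ℕ), i.2⟩
  left_inv i := rfl
  right_inv i := rfl

/-- The canonical embedding `ι_{m,n} : G ≀ S(m) → G ≀ S(n)` for `m ≤ n`. -/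
def emb {m n : ℕ} (h : m ≤ n) (x : WP G m) : WP G n :=
  ⟨fun i => if hi : (i : ℕ) < m then x.left ⟨(i : ℕ), hi⟩ else 1,
    x.right.extendDomain (castEquiv h)⟩

end WP

/-- `c` is a conjugacy class of `G`. -/
def IsConjClass {G : Type*} [Group G] (c : Set G) : Prop :=
  ∃ g : G, c = {h | IsConj g h}

end WreathPaper

namespace WreathPaper
namespace WP

open Fin Equiv Function

variable {G : Type*} [Group G] {n : ℕ}

@[simp] theorem permAut_apply (s : Equiv.Perm (Fin n)) (g : Fin n → G) (i : Fin n) :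
    (permAut G n s g) i = g (s⁻¹ i) := rfl

theorem perm_apply_inv_self {α : Type*} (f : Equiv.Perm α) (x : α) : f (f⁻¹ x) = x :=
  f.apply_symm_apply x

theorem perm_inv_apply_self {α : Type*} (f : Equiv.Perm α) (x : α) : f⁻¹ (f x) = x :=
  f.symm_apply_apply x

theorem castSucc_projPerm (s : Equiv.Perm (Fin (n+1))) (j : Fin n) :
    Fin.castSucc (projPerm s j) =
      if s (Fin.castSucc j) = Fin.last n then s (Fin.last n) else s (Fin.castSucc j) := by
  set e := finSuccEquivLast.symm.trans (s.trans finSuccEquivLast) with he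
  have hesome : ∀ i : Fin n, e (some i) = finSuccEquivLast (s (Fin.castSucc i)) := by
    intro i; simp [he]
  have henone : e none = finSuccEquivLast (s (Fin.last n)) := by simp [he]
  split_ifs with h
  · have h1 : e (some j) = none := by rw [hesome, h, finSuccEquivLast_last]
    have hne : s (Fin.last n) ≠ Fin.last n := by
      intro hcon
      exact (Fin.castSucc_lt_last j).ne (s.injective (h.trans hcon.symm))
    obtain ⟨y, hy⟩ := Fin.eq_castSucc_of_ne_last hne
    have h2 : some (projPerm s j) = e none := Equiv.removeNone_none _ h1
    rw [henone, ← hy, finSuccEquivLast_castSucc] at h2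
    rw [← hy]
    exact congrArg Fin.castSucc (Option.some_injective _ h2)
  · obtain ⟨y, hy⟩ := Fin.eq_castSucc_of_ne_last h
    have h1 : e (some j) = some y := by rw [hesome, ← hy, finSuccEquivLast_castSucc]
    have h2 : some (projPerm s j) = e (some j) := Equiv.removeNone_some _ ⟨y, h1⟩
    rw [h1] at h2
    rw [← hy]
    exact congrArg Fin.castSucc (Option.some_injective _ h2)

theorem projPerm_inv (s : Equiv.Perm (Fin (n+1))) : projPerm s⁻¹ = (projPerm s)⁻¹ := by
  have h : projPerm s * projPerm s⁻¹ = 1 := by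
    apply Equiv.ext; intro j
    apply Fin.castSucc_injective
    rw [Equiv.Perm.mul_apply, castSucc_projPerm]
    by_cases hA : s⁻¹ (Fin.castSucc j) = Fin.last n
    · have h1 : Fin.castSucc (projPerm s⁻¹ j) = s⁻¹ (Fin.last n) := by
        rw [castSucc_projPerm, if_pos hA]
      rw [h1, if_pos (perm_apply_inv_self s _)]
      have := hA
      rw [Equiv.Perm.inv_eq_iff_eq] at this
      simp [this]
    · have h1 : Fin.castSucc (projPerm s⁻¹ j) = s⁻¹ (Fin.castSucc j) := by
        rw [castSucc_projPerm, if_neg hA]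
      rw [h1, perm_apply_inv_self s, if_neg (Fin.castSucc_lt_last j).ne]
      simp
  exact (mul_eq_one_iff_inv_eq.mp h).symm

theorem projPerm_one : projPerm (1 : Equiv.Perm (Fin (n+1))) = 1 := by
  apply Equiv.ext; intro j
  apply Fin.castSucc_injective
  rw [castSucc_projPerm]
  simp [(Fin.castSucc_lt_last j).ne]

theorem projPerm_mul_right (s t : Equiv.Perm (Fin (n+1))) (ht : t (Fin.last n) = Fin.last n) :
    projPerm (s * t) = projPerm s * projPerm t := by
  apply Equiv.ext; intro j
  apply Fin.castSucc_injective
  have h1 : Fin.castSucc (projPerm t j) = t (Fin.castSucc j) := by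
    rw [castSucc_projPerm, if_neg]
    intro hcon
    exact (Fin.castSucc_lt_last j).ne (t.injective (hcon.trans ht.symm))
  rw [Equiv.Perm.mul_apply, castSucc_projPerm, castSucc_projPerm, h1, Equiv.Perm.mul_apply,
    Equiv.Perm.mul_apply, ht]

theorem projPerm_mul_left (s t : Equiv.Perm (Fin (n+1))) (hs : s (Fin.last n) = Fin.last n) :
    projPerm (s * t) = projPerm s * projPerm t := by
  apply Equiv.ext; intro j
  apply Fin.castSucc_injective
  rw [Equiv.Perm.mul_apply, castSucc_projPerm, castSucc_projPerm, castSucc_projPerm,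
    Equiv.Perm.mul_apply]
  by_cases h : t (Fin.castSucc j) = Fin.last n
  · rw [if_pos h, if_pos (by rw [h, hs]),
      if_neg (fun hcon => (Fin.castSucc_lt_last j).ne
        (t.injective (h.trans (s.injective (hcon.trans hs.symm)).symm)))]
    rfl
  · rw [if_neg h, if_neg (fun hcon => h (s.injective (hcon.trans hs.symm))),
      if_neg (fun hcon => h (s.injective (hcon.trans hs.symm)))]

end WP
end WreathPaper
namespace WreathPaper
namespace WP

variable {G : Type*} [Group G] {n : ℕ}

theorem proj_right (x : WP G (n+1)) : (proj x).right = projPerm x.right := rfl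

theorem proj_left (x : WP G (n+1)) (i : Fin n) :
    (proj x).left i = if x.right (Fin.last n) = Fin.castSucc i
      then x.left (Fin.castSucc i) * x.left (Fin.last n)
      else x.left (Fin.castSucc i) := rfl

theorem proj_left_of_fix (x : WP G (n+1)) (hx : x.right (Fin.last n) = Fin.last n) (i : Fin n) :
    (proj x).left i = x.left (Fin.castSucc i) := by
  rw [proj_left, if_neg]
  intro hcon
  exact (Fin.castSucc_lt_last i).ne (hx.symm.trans hcon).symm

theorem proj_mul_right (y b : WP G (n+1)) (hb1 : b.right (Fin.last n) = Fin.last n)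
    (hb2 : b.left (Fin.last n) = 1) : proj (y * b) = proj y * proj b := by
  have hR : (proj (y * b)).right = (proj y * proj b).right := by
    simp only [proj_right, SemidirectProduct.mul_right]
    exact projPerm_mul_right _ _ hb1
  have hL : (proj (y * b)).left = (proj y * proj b).left := by
    funext i
    simp only [proj_left, Pi.mul_apply, permAut_apply, SemidirectProduct.mul_left,
      SemidirectProduct.mul_right, SemidirectProduct.inv_right, proj_right,
      Equiv.Perm.mul_apply, hb1, hb2, mul_one, one_mul]
    by_cases hq : y.right (Fin.last n) = Fin.castSucc i
    · have h1 : y.right⁻¹ (Fin.castSucc i) = Fin.last n := by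
        rw [← hq, perm_inv_apply_self]
      have h2 : Fin.castSucc ((projPerm y.right)⁻¹ i) = y.right⁻¹ (Fin.last n) := by
        rw [← projPerm_inv, castSucc_projPerm, if_pos h1]
      rw [if_pos hq, if_pos hq, h1, hb2, mul_one, h2,
        if_neg (fun hcon : Fin.last n = y.right⁻¹ (Fin.last n) => (Fin.castSucc_lt_last i).ne
          (hq.symm.trans (Equiv.Perm.inv_eq_iff_eq.mp hcon.symm).symm)), mul_assoc]
    · have h1 : y.right⁻¹ (Fin.castSucc i) ≠ Fin.last n := by
        intro hcon
        exact hq (by rw [← hcon, perm_apply_inv_self])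
      have h2 : Fin.castSucc ((projPerm y.right)⁻¹ i) = y.right⁻¹ (Fin.castSucc i) := by
        rw [← projPerm_inv, castSucc_projPerm, if_neg h1]
      rw [if_neg hq, if_neg hq, h2, if_neg (fun hcon => h1 hcon.symm)]
  exact SemidirectProduct.ext hL hR

theorem proj_mul_left (y b : WP G (n+1)) (hb1 : b.right (Fin.last n) = Fin.last n)
    (hb2 : b.left (Fin.last n) = 1) : proj (b * y) = proj b * proj y := by
  have hR : (proj (b * y)).right = (proj b * proj y).right := by
    simp only [proj_right, SemidirectProduct.mul_right]
    exact projPerm_mul_left _ _ hb1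
  have hL : (proj (b * y)).left = (proj b * proj y).left := by
    funext i
    have hbinv : ∀ j : Fin n, b.right⁻¹ (Fin.castSucc j) ≠ Fin.last n := by
      intro j hcon
      exact (Fin.castSucc_lt_last j).ne
        (by rw [← perm_apply_inv_self b.right (Fin.castSucc j), hcon, hb1])
    have h2 : Fin.castSucc ((projPerm b.right)⁻¹ i) = b.right⁻¹ (Fin.castSucc i) := by
      rw [← projPerm_inv, castSucc_projPerm, if_neg (hbinv i)]
    have hblast : b.right⁻¹ (Fin.last n) = Fin.last n :=
      Equiv.Perm.inv_eq_iff_eq.mpr hb1.symm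
    simp only [proj_left, Pi.mul_apply, permAut_apply, SemidirectProduct.mul_left,
      SemidirectProduct.mul_right, SemidirectProduct.inv_right, proj_right,
      Equiv.Perm.mul_apply, hb1, hb2, hblast, mul_one, one_mul]
    rw [h2, if_neg (fun hcon : Fin.last n = Fin.castSucc i =>
      (Fin.castSucc_lt_last i).ne hcon.symm)]
    by_cases hc : y.right (Fin.last n) = b.right⁻¹ (Fin.castSucc i)
    · rw [if_pos hc, if_pos (by rw [hc, perm_apply_inv_self]), mul_assoc]
    · rw [if_neg hc, if_neg (fun hcon => hc (Equiv.Perm.eq_inv_iff_eq.mpr hcon))]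
  exact SemidirectProduct.ext hL hR

theorem proj_one : proj (1 : WP G (n+1)) = 1 := by
  refine SemidirectProduct.ext ?_ ?_
  · funext i
    simp [proj_left]
  · simp only [proj_right, SemidirectProduct.one_right]
    exact projPerm_one

theorem good_inv (b : WP G (n+1)) (hb1 : b.right (Fin.last n) = Fin.last n)
    (hb2 : b.left (Fin.last n) = 1) :
    b⁻¹.right (Fin.last n) = Fin.last n ∧ b⁻¹.left (Fin.last n) = 1 := by
  constructor
  · rw [SemidirectProduct.inv_right]
    exact Equiv.Perm.inv_eq_iff_eq.mpr hb1.symm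
  · rw [SemidirectProduct.inv_left, permAut_apply, inv_inv, hb1, Pi.inv_apply, hb2, inv_one]

theorem proj_inv (b : WP G (n+1)) (hb1 : b.right (Fin.last n) = Fin.last n)
    (hb2 : b.left (Fin.last n) = 1) : proj b⁻¹ = (proj b)⁻¹ := by
  have h := proj_mul_right b⁻¹ b hb1 hb2
  rw [inv_mul_cancel, proj_one] at h
  exact eq_inv_of_mul_eq_one_left h.symm

end WP
end WreathPaper
namespace WreathPaper
namespace WP

variable {G : Type*} [Group G] {n m : ℕ}

theorem emb_right_last (h : m ≤ n) (w : WP G m) :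
    (emb (h.trans (Nat.le_succ n)) w).right (Fin.last n) = Fin.last n :=
  Equiv.Perm.extendDomain_apply_not_subtype _ _ (by simp; omega)

theorem emb_left_last (h : m ≤ n) (w : WP G m) :
    (emb (h.trans (Nat.le_succ n)) w).left (Fin.last n) = 1 :=
  dif_neg (by simp; omega)

theorem proj_emb (h : m ≤ n) (w : WP G m) :
    proj (emb (h.trans (Nat.le_succ n)) w) = emb h w := by
  have hkey : ∀ j : Fin n, (emb (h.trans (Nat.le_succ n)) w).right (Fin.castSucc j)
      = Fin.castSucc ((emb h w).right j) := by
    intro j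
    by_cases hj : (j : ℕ) < m
    · have hj' : ((Fin.castSucc j : Fin (n+1)) : ℕ) < m := by simpa using hj
      rw [show (emb (h.trans (Nat.le_succ n)) w).right = w.right.extendDomain
        (castEquiv (h.trans (Nat.le_succ n))) from rfl,
        show (emb h w).right = w.right.extendDomain (castEquiv h) from rfl,
        Equiv.Perm.extendDomain_apply_subtype (e := w.right)
          (f := castEquiv (h.trans (Nat.le_succ n))) hj',
        Equiv.Perm.extendDomain_apply_subtype (e := w.right) (f := castEquiv h) hj]
      apply Fin.ext
      simp [castEquiv]
    · have hj' : ¬ ((Fin.castSucc j : Fin (n+1)) : ℕ) < m := by simpa using hj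
      rw [show (emb (h.trans (Nat.le_succ n)) w).right = w.right.extendDomain
        (castEquiv (h.trans (Nat.le_succ n))) from rfl,
        show (emb h w).right = w.right.extendDomain (castEquiv h) from rfl,
        Equiv.Perm.extendDomain_apply_not_subtype (e := w.right)
          (f := castEquiv (h.trans (Nat.le_succ n))) hj',
        Equiv.Perm.extendDomain_apply_not_subtype (e := w.right) (f := castEquiv h) hj]
  refine SemidirectProduct.ext ?_ ?_
  · funext i
    rw [proj_left_of_fix _ (emb_right_last h w)]
    by_cases hi : (i : ℕ) < m
    · rw [show (emb (h.trans (Nat.le_succ n)) w).left (Fin.castSucc i)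
          = w.left ⟨(i : ℕ), hi⟩ from dif_pos (by simpa using hi),
        show (emb h w).left i = w.left ⟨(i : ℕ), hi⟩ from dif_pos hi]
    · rw [show (emb (h.trans (Nat.le_succ n)) w).left (Fin.castSucc i) = 1 from
          dif_neg (by simpa using hi),
        show (emb h w).left i = 1 from dif_neg hi]
  · apply Equiv.ext; intro j
    apply Fin.castSucc_injective
    rw [proj_right, castSucc_projPerm, if_neg, hkey]
    rw [hkey]
    exact (Fin.castSucc_lt_last _).ne

theorem proj_conj (h : m ≤ n) (w₁ w₂ : WP G m) (y : WP G (n+1)) :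
    proj ((emb (h.trans (Nat.le_succ n)) w₂)⁻¹ * y * emb (h.trans (Nat.le_succ n)) w₁)
      = (emb h w₂)⁻¹ * proj y * emb h w₁ := by
  have ha := good_inv _ (emb_right_last h w₂) (emb_left_last h w₂)
  rw [proj_mul_right _ _ (emb_right_last h w₁) (emb_left_last h w₁),
    proj_mul_left _ _ ha.1 ha.2,
    proj_inv _ (emb_right_last h w₂) (emb_left_last h w₂),
    proj_emb, proj_emb]

theorem conj_right_last (y a b : WP G (n+1)) (ha1 : a.right (Fin.last n) = Fin.last n)
    (hb1 : b.right (Fin.last n) = Fin.last n) :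
    (a⁻¹ * y * b).right (Fin.last n) = Fin.last n ↔ y.right (Fin.last n) = Fin.last n := by
  simp only [SemidirectProduct.mul_right, SemidirectProduct.inv_right, Equiv.Perm.mul_apply,
    hb1]
  rw [Equiv.Perm.inv_eq_iff_eq, ha1]

theorem conj_left_last (y a b : WP G (n+1)) (ha1 : a.right (Fin.last n) = Fin.last n)
    (ha2 : a.left (Fin.last n) = 1) (hb2 : b.left (Fin.last n) = 1)
    (hy : y.right (Fin.last n) = Fin.last n) :
    (a⁻¹ * y * b).left (Fin.last n) = y.left (Fin.last n) := by
  have h1 : y.right⁻¹ (Fin.last n) = Fin.last n := Equiv.Perm.inv_eq_iff_eq.mpr hy.symm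
  have h2 : a.right⁻¹⁻¹ (Fin.last n) = Fin.last n := by rw [inv_inv, ha1]
  simp only [SemidirectProduct.mul_left, SemidirectProduct.inv_left,
    SemidirectProduct.mul_right, SemidirectProduct.inv_right, permAut_apply, Pi.mul_apply,
    Pi.inv_apply, Equiv.Perm.mul_apply, mul_inv_rev, inv_inv, ha1, h1, h2, ha2, hb2,
    inv_one, one_mul, mul_one]
end WP
end WreathPaper
namespace WreathPaper
namespace WP

variable {G : Type*} [Group G] {n : ℕ}

theorem pow_succ_apply {α : Type*} (s : Equiv.Perm α) (M : ℕ) (x : α) :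
    (s ^ (M+1)) x = s ((s ^ M) x) := by
  rw [pow_succ', Equiv.Perm.mul_apply]

theorem range_reverse_prod_succ (f : ℕ → G) (k : ℕ) :
    ((List.range (k+1)).reverse.map f).prod = f k * ((List.range k).reverse.map f).prod := by
  simp [List.range_succ]

theorem range_reverse_map_congr {f g : ℕ → G} {k : ℕ} (h : ∀ j < k, f j = g j) :
    (List.range k).reverse.map f = (List.range k).reverse.map g := by
  apply List.map_congr_left
  intro a ha
  exact h a (List.mem_range.mp (List.mem_reverse.mp ha))

theorem prod_split (f : ℕ → G) (a d : ℕ) :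
    ((List.range (a + d)).reverse.map f).prod
      = ((List.range d).reverse.map (fun j => f (a + j))).prod
        * ((List.range a).reverse.map f).prod := by
  simp [List.range_add, List.map_map, Function.comp_def]

theorem prod_shift (F E : ℕ → G) (t r : ℕ) (ht : t < r)
    (h1 : ∀ j < t, E j = F j) (h2 : E t = F (t+1) * F t)
    (h3 : ∀ j, t < j → j < r → E j = F (j+1)) :
    ((List.range r).reverse.map E).prod = ((List.range (r+1)).reverse.map F).prod := by
  obtain ⟨d, rfl⟩ : ∃ d, r = (t+1) + d := ⟨r - (t+1), by omega⟩
  rw [show (t+1) + d + 1 = (t+2) + d by omega]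
  rw [prod_split E (t+1) d, prod_split F (t+2) d]
  have e1 : (List.range d).reverse.map (fun j => E (t+1+j))
      = (List.range d).reverse.map (fun j => F (t+2+j)) :=
    range_reverse_map_congr (fun j hj => by
      rw [h3 (t+1+j) (by omega) (by omega)]; congr 1; omega)
  rw [e1, range_reverse_prod_succ E t, range_reverse_prod_succ F (t+1),
    range_reverse_prod_succ F t, h2, range_reverse_map_congr (fun j hj => h1 j hj)]
  group

theorem prod_rot (F E : ℕ → G) (r : ℕ) (hr : 0 < r)
    (h1 : ∀ j, 0 < j → j < r → E j = F j) (h2 : E 0 = F 0 * F r) :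
    ((List.range r).reverse.map E).prod
      = (F r)⁻¹ * ((List.range (r+1)).reverse.map F).prod * F r := by
  obtain ⟨d, rfl⟩ : ∃ d, r = 1 + d := ⟨r - 1, by omega⟩
  rw [range_reverse_prod_succ F (1+d), prod_split E 1 d, prod_split F 1 d]
  have e1 : (List.range d).reverse.map (fun j => E (1+j))
      = (List.range d).reverse.map (fun j => F (1+j)) :=
    range_reverse_map_congr (fun j hj => h1 (1+j) (by omega) (by omega))
  have e2 : ((List.range 1).reverse.map E).prod = E 0 := by simp [List.range_succ]
  have e3 : ((List.range 1).reverse.map F).prod = F 0 := by simp [List.range_succ]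
  rw [e1, e2, e3, h2]
  group

theorem orbit_back (s : Equiv.Perm (Fin (n+1))) (i : Fin n) (M : ℕ) :
    (∃ k, (s ^ M) (Fin.castSucc i) = Fin.castSucc ((projPerm s ^ k) i)) ∨
    ((s ^ M) (Fin.castSucc i) = Fin.last n ∧
      ∃ k, Fin.castSucc ((projPerm s ^ k) i) = s⁻¹ (Fin.last n)) := by
  induction M with
  | zero => exact Or.inl ⟨0, by simp⟩
  | succ M ih =>
    rcases ih with ⟨k, hk⟩ | ⟨hlast, k, hk⟩
    · by_cases hcond : s (Fin.castSucc ((projPerm s ^ k) i)) = Fin.last n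
      · refine Or.inr ⟨by rw [pow_succ_apply, hk, hcond], ⟨k, ?_⟩⟩
        exact Equiv.Perm.eq_inv_iff_eq.mpr hcond
      · refine Or.inl ⟨k + 1, ?_⟩
        rw [pow_succ_apply, hk, pow_succ_apply, castSucc_projPerm, if_neg hcond]
    · refine Or.inl ⟨k + 1, ?_⟩
      rw [pow_succ_apply, hlast, pow_succ_apply, castSucc_projPerm,
        if_pos (by rw [hk, perm_apply_inv_self])]

theorem orbit_forward (s : Equiv.Perm (Fin (n+1))) (i : Fin n) (k : ℕ) :
    ∃ M, (s ^ M) (Fin.castSucc i) = Fin.castSucc ((projPerm s ^ k) i) := by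
  induction k with
  | zero => exact ⟨0, by simp⟩
  | succ k ih =>
    obtain ⟨M, hM⟩ := ih
    by_cases hcond : s (Fin.castSucc ((projPerm s ^ k) i)) = Fin.last n
    · refine ⟨M + 2, ?_⟩
      rw [pow_succ_apply, pow_succ_apply, hM, hcond, pow_succ_apply, castSucc_projPerm,
        if_pos hcond]
    · refine ⟨M + 1, ?_⟩
      rw [pow_succ_apply, hM, pow_succ_apply, castSucc_projPerm, if_neg hcond]

theorem min_transfer (s : Equiv.Perm (Fin (n+1))) (i : Fin n) :
    (∀ k : ℕ, i ≤ (projPerm s ^ k) i) ↔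
      (∀ M : ℕ, Fin.castSucc i ≤ (s ^ M) (Fin.castSucc i)) := by
  constructor
  · intro h M
    rcases orbit_back s i M with ⟨k, hk⟩ | ⟨hlast, _⟩
    · rw [hk]; exact Fin.castSucc_le_castSucc_iff.mpr (h k)
    · rw [hlast]; exact Fin.le_last _
  · intro h k
    obtain ⟨M, hM⟩ := orbit_forward s i k
    have := h M
    rw [hM] at this
    exact Fin.castSucc_le_castSucc_iff.mp this

theorem min_last (s : Equiv.Perm (Fin (n+1))) :
    (∀ M : ℕ, Fin.last n ≤ (s ^ M) (Fin.last n)) ↔ s (Fin.last n) = Fin.last n := by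
  constructor
  · intro h
    exact le_antisymm (Fin.le_last _) (by simpa using h 1)
  · intro h M
    have : ∀ M : ℕ, (s ^ M) (Fin.last n) = Fin.last n := by
      intro M
      induction M with
      | zero => simp
      | succ M ih => rw [pow_succ_apply, ih, h]
    rw [this M]

end WP
end WreathPaper
namespace WreathPaper
namespace WP

variable {G : Type*} [Group G] {n : ℕ}

theorem perm_mem_periodicPts {N : ℕ} (s : Equiv.Perm (Fin N)) (x : Fin N) :
    x ∈ Function.periodicPts ⇑s :=
  ⟨orderOf s, orderOf_pos s, by
    simp [Function.IsPeriodicPt, Function.IsFixedPt, Equiv.Perm.iterate_eq_pow,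
      pow_orderOf_eq_one]⟩

theorem minPeriod_pos {N : ℕ} (s : Equiv.Perm (Fin N)) (x : Fin N) :
    0 < Function.minimalPeriod ⇑s x :=
  Function.minimalPeriod_pos_of_mem_periodicPts (perm_mem_periodicPts s x)

theorem pow_minPeriod {N : ℕ} (s : Equiv.Perm (Fin N)) (x : Fin N) :
    (s ^ Function.minimalPeriod ⇑s x) x = x :=
  Function.isPeriodicPt_minimalPeriod ⇑s x

theorem minPeriod_le {N : ℕ} (s : Equiv.Perm (Fin N)) (x : Fin N) {k : ℕ} (hk : 0 < k)
    (h : (s ^ k) x = x) : Function.minimalPeriod ⇑s x ≤ k :=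
  Function.IsPeriodicPt.minimalPeriod_le hk
    (by simpa [Function.IsPeriodicPt, Function.IsFixedPt, Equiv.Perm.iterate_eq_pow] using h)

theorem pow_inj {N : ℕ} (s : Equiv.Perm (Fin N)) (x : Fin N) {M₁ M₂ : ℕ}
    (h1 : M₁ < Function.minimalPeriod ⇑s x) (h2 : M₂ < Function.minimalPeriod ⇑s x)
    (h : (s ^ M₁) x = (s ^ M₂) x) : M₁ = M₂ :=
  Function.iterate_injOn_Iio_minimalPeriod (f := ⇑s) (x := x) h1 h2
    (by simpa [Equiv.Perm.iterate_eq_pow] using h)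

theorem pow_mod {N : ℕ} (s : Equiv.Perm (Fin N)) (x : Fin N) (M : ℕ) :
    (s ^ (M % Function.minimalPeriod ⇑s x)) x = (s ^ M) x :=
  Function.iterate_mod_minimalPeriod_eq (f := ⇑s) (x := x) (n := M)

theorem cycleProd_last (z : WP G (n+1)) (hfix : z.right (Fin.last n) = Fin.last n) :
    cycleProd z (Fin.last n) = z.left (Fin.last n) := by
  have h1 : Function.minimalPeriod ⇑z.right (Fin.last n) = 1 :=
    Function.minimalPeriod_eq_one_iff_isFixedPt.mpr hfix
  simp [cycleProd, h1, List.range_succ]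

theorem cycleProd_proj_isConj (z : WP G (n+1)) (i : Fin n) :
    ∃ u : G, cycleProd (proj z) i = u⁻¹ * cycleProd z (Fin.castSucc i) * u := by
  set s := z.right with hs
  set ci := Fin.castSucc i with hci
  set r' := Function.minimalPeriod ⇑s ci with hr'
  set r := Function.minimalPeriod ⇑(projPerm s) i with hr
  set F : ℕ → G := fun j => z.left ((s ^ j) ci) with hF
  set E : ℕ → G := fun j => (proj z).left ((projPerm s ^ j) i) with hE
  have hEdef : cycleProd (proj z) i = ((List.range r).reverse.map E).prod := rfl
  have hFdef : cycleProd z ci = ((List.range r').reverse.map F).prod := rfl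
  have hpos' : 0 < r' := minPeriod_pos s ci
  have hposr : 0 < r := minPeriod_pos (projPerm s) i
  have hperci : (s ^ r') ci = ci := pow_minPeriod s ci
  have hperi : (projPerm s ^ r) i = i := pow_minPeriod (projPerm s) i
  by_cases hX : ∀ M, M < r' → (s ^ M) ci ≠ Fin.last n
  · -- orbit avoids the last point: products are equal
    have X1 : ∀ k, Fin.castSucc ((projPerm s ^ k) i) = (s ^ k) ci := by
      intro k
      induction k with
      | zero => simp [hci]
      | succ k ih =>
        have hcond : s (Fin.castSucc ((projPerm s ^ k) i)) ≠ Fin.last n := by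
          rw [ih, ← pow_succ_apply, ← pow_mod]
          exact hX _ (Nat.mod_lt _ hpos')
        rw [pow_succ_apply, castSucc_projPerm, if_neg hcond, ih, ← pow_succ_apply]
    have X2 : r = r' := by
      apply le_antisymm
      · refine minPeriod_le _ _ hpos' ?_
        apply Fin.castSucc_injective
        rw [X1, hperci]
      · refine minPeriod_le _ _ hposr ?_
        rw [← X1, hperi]
    have hlastne : ∀ j, j < r' → s (Fin.last n) ≠ (s ^ j) ci := by
      intro j hj hcon
      have hq : s ((s ^ (j + r' - 1)) ci) = (s ^ j) ci := by
        rw [← pow_succ_apply, show j + r' - 1 + 1 = j + r' by omega, ← pow_mod,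
          Nat.add_mod_right, Nat.mod_eq_of_lt hj]
      have h2 : Fin.last n = (s ^ ((j + r' - 1) % r')) ci := by
        rw [pow_mod]
        exact s.injective (hcon.trans hq.symm)
      exact hX _ (Nat.mod_lt _ hpos') h2.symm
    have hEF : ∀ j, j < r' → E j = F j := by
      intro j hj
      show (proj z).left ((projPerm s ^ j) i) = F j
      rw [proj_left, if_neg (by rw [X1 j]; exact hlastne j hj), X1 j]
    refine ⟨1, ?_⟩
    rw [hEdef, hFdef, inv_one, one_mul, mul_one, X2,
      range_reverse_map_congr (fun j hj => hEF j hj)]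
  · push_neg at hX
    obtain ⟨t, ht, hlast⟩ := hX
    have ht1 : 1 ≤ t := by
      rcases Nat.eq_zero_or_pos t with h0 | h1
      · exfalso
        rw [h0, pow_zero] at hlast
        exact (Fin.castSucc_lt_last i).ne (by simpa [hci] using hlast)
      · exact h1
    have hr2 : 2 ≤ r' := by omega
    have hb : s (Fin.last n) = (s ^ (t+1)) ci := by rw [pow_succ_apply, hlast]
    have Y1 : ∀ j, j < t → Fin.castSucc ((projPerm s ^ j) i) = (s ^ j) ci := by
      intro j
      induction j with
      | zero => intro _; simp [hci]
      | succ j ih =>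
        intro hj
        have ihj := ih (by omega)
        have hcond : s (Fin.castSucc ((projPerm s ^ j) i)) ≠ Fin.last n := by
          rw [ihj, ← pow_succ_apply, ← hlast]
          intro hcon
          exact absurd (pow_inj s ci (by omega) ht hcon) (by omega)
        rw [pow_succ_apply, castSucc_projPerm, if_neg hcond, ihj, ← pow_succ_apply]
    have Y2 : ∀ j, t ≤ j → j ≤ r' - 1 →
        Fin.castSucc ((projPerm s ^ j) i) = (s ^ (j+1)) ci := by
      intro j hj
      induction j, hj using Nat.le_induction with
      | base =>
        intro _
        have h0 : Fin.castSucc ((projPerm s ^ (t-1)) i) = (s ^ (t-1)) ci := Y1 _ (by omega)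
        have hc : s (Fin.castSucc ((projPerm s ^ (t-1)) i)) = Fin.last n := by
          rw [h0, ← pow_succ_apply, show t - 1 + 1 = t by omega, hlast]
        have he : (projPerm s ^ t) i = (projPerm s ^ (t-1+1)) i := by
          rw [show t-1+1 = t by omega]
        rw [he, pow_succ_apply, castSucc_projPerm, if_pos hc, hb]
      | succ j hj ih =>
        intro hj1
        have ihj := ih (by omega)
        have hcond : s (Fin.castSucc ((projPerm s ^ j) i)) ≠ Fin.last n := by
          rw [ihj, ← pow_succ_apply]
          by_cases hj2 : j + 2 = r'
          · rw [show j + 1 + 1 = r' by omega, hperci]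
            exact fun hcon => (Fin.castSucc_lt_last i).ne (by simpa [hci] using hcon)
          · rw [← hlast]
            intro hcon
            exact absurd (pow_inj s ci (by omega) ht hcon) (by omega)
        rw [pow_succ_apply, castSucc_projPerm, if_neg hcond, ihj, ← pow_succ_apply]
    have Y3 : r = r' - 1 := by
      have hper' : (projPerm s ^ (r' - 1)) i = i := by
        have h0 := Y2 (r' - 1) (by omega) le_rfl
        rw [show r' - 1 + 1 = r' by omega, hperci] at h0
        exact Fin.castSucc_injective _ h0
      apply le_antisymm
      · exact minPeriod_le _ _ (by omega) hper'
      · by_contra hlt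
        push_neg at hlt
        by_cases hrt : r < t
        · have h0 := Y1 r hrt
          rw [hperi] at h0
          have h1 : (s ^ 0) ci = (s ^ r) ci := by simpa [hci] using h0
          have := pow_inj s ci (by omega) (by omega) h1
          omega
        · push_neg at hrt
          have h0 := Y2 r hrt (by omega)
          rw [hperi] at h0
          have h1 : (s ^ 0) ci = (s ^ (r+1)) ci := by simpa [hci] using h0
          have := pow_inj s ci (by omega) (by omega) h1
          omega
    have hFt : F t = z.left (Fin.last n) := by rw [hF]; simp only [hlast]
    by_cases hbt : t = r' - 1
    · -- the cycle through `last` closes back at `ci`: conjugation by `F r`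
      have hbci : s (Fin.last n) = ci := by
        rw [hb, show t + 1 = r' by omega, hperci]
      have h1 : ∀ j, 0 < j → j < r → E j = F j := by
        intro j hj0 hjr
        show (proj z).left ((projPerm s ^ j) i) = F j
        have hY := Y1 j (by omega)
        rw [proj_left, if_neg (by
          rw [hY]
          intro hcon
          have h2 : (s ^ 0) ci = (s ^ j) ci := by simpa using (hbci.symm.trans hcon)
          have := pow_inj s ci (by omega) (by omega) h2
          omega), hY]
      have h2 : E 0 = F 0 * F r := by
        show (proj z).left ((projPerm s ^ 0) i) = F 0 * F r
        have h3 : (projPerm s ^ 0) i = i := by simp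
        rw [h3, proj_left, if_pos (hbci.trans hci), ← hFt, show r = t from by omega]
        simp [hF, hci]
      refine ⟨F r, ?_⟩
      rw [hEdef, hFdef, show r' = r + 1 from by omega]
      exact prod_rot F E r (by omega) h1 h2
    · -- products are literally equal
      have h1 : ∀ j, j < t → E j = F j := by
        intro j hj
        show (proj z).left ((projPerm s ^ j) i) = F j
        have hY := Y1 j hj
        rw [proj_left, if_neg (by
          rw [hY]
          intro hcon
          have := pow_inj s ci (by omega) (by omega) (hb.symm.trans hcon)
          omega), hY]
      have h2 : E t = F (t+1) * F t := by
        show (proj z).left ((projPerm s ^ t) i) = F (t+1) * F t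
        have hY := Y2 t le_rfl (by omega)
        rw [proj_left, if_pos (by rw [hY]; exact hb), hY, ← hFt]
      have h3 : ∀ j, t < j → j < r → E j = F (j+1) := by
        intro j hjt hjr
        show (proj z).left ((projPerm s ^ j) i) = F (j+1)
        have hY := Y2 j (le_of_lt hjt) (by omega)
        rw [proj_left, if_neg (by
          rw [hY]
          intro hcon
          have := pow_inj s ci (by omega) (by omega) (hb.symm.trans hcon)
          omega), hY]
      refine ⟨1, ?_⟩
      rw [hEdef, hFdef, inv_one, one_mul, mul_one, show r' = r + 1 from by omega]
      exact prod_shift F E t r (by omega) h1 h2 h3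

end WP
end WreathPaper
namespace WreathPaper
namespace WP

variable {G : Type*} [Group G] {n m : ℕ}

open scoped Classical in
theorem cycleCount_proj {c : Set G} (hc : IsConjClass c) (z : WP G (n+1)) :
    cycleCount z c = cycleCount (proj z) c
      + (if z.right (Fin.last n) = Fin.last n ∧ z.left (Fin.last n) ∈ c then 1 else 0) := by
  obtain ⟨g, rfl⟩ := hc
  set S : Set (Fin (n+1)) :=
    {j | (∀ M : ℕ, j ≤ (z.right ^ M) j) ∧ cycleProd z j ∈ {h | IsConj g h}} with hS
  set T : Set (Fin n) :=
    {i | (∀ k : ℕ, i ≤ ((proj z).right ^ k) i) ∧ cycleProd (proj z) i ∈ {h | IsConj g h}}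
    with hT
  have hmem : ∀ i : Fin n, i ∈ T ↔ Fin.castSucc i ∈ S := by
    intro i
    have hconj : IsConj (cycleProd z (Fin.castSucc i)) (cycleProd (proj z) i) := by
      obtain ⟨u, hu⟩ := cycleProd_proj_isConj z i
      exact isConj_iff.mpr ⟨u⁻¹, by rw [hu]; group⟩
    constructor
    · rintro ⟨hmin, hprod⟩
      exact ⟨(min_transfer z.right i).mp hmin, hprod.trans hconj.symm⟩
    · rintro ⟨hmin, hprod⟩
      exact ⟨(min_transfer z.right i).mpr hmin, hprod.trans hconj⟩
  have himg : Fin.castSucc '' T = S \ {Fin.last n} := by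
    ext j
    constructor
    · rintro ⟨i, hi, rfl⟩
      exact ⟨(hmem i).mp hi, (Fin.castSucc_lt_last i).ne⟩
    · rintro ⟨hjS, hjne⟩
      obtain ⟨i, rfl⟩ := Fin.eq_castSucc_of_ne_last hjne
      exact ⟨i, (hmem i).mpr hjS, rfl⟩
  have hlastmem : Fin.last n ∈ S ↔
      (z.right (Fin.last n) = Fin.last n ∧ z.left (Fin.last n) ∈ {h | IsConj g h}) := by
    constructor
    · rintro ⟨hmin, hprod⟩
      have hfix := (min_last z.right).mp hmin
      exact ⟨hfix, by rwa [cycleProd_last z hfix] at hprod⟩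
    · rintro ⟨hfix, hmem'⟩
      exact ⟨(min_last z.right).mpr hfix, by rwa [cycleProd_last z hfix]⟩
  have e1 : cycleCount z {h | IsConj g h} = S.ncard := by
    rw [← Nat.card_coe_set_eq]
    rfl
  have e2 : cycleCount (proj z) {h | IsConj g h} = T.ncard := by
    rw [← Nat.card_coe_set_eq]
    rfl
  have e3 : T.ncard = (S \ {Fin.last n}).ncard := by
    rw [← himg, Set.ncard_image_of_injective T (Fin.castSucc_injective n)]
  rw [e1, e2, e3]
  by_cases hin : Fin.last n ∈ S
  · rw [if_pos (hlastmem.mp hin), Set.ncard_diff_singleton_add_one hin]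
  · rw [if_neg (fun hcon => hin (hlastmem.mpr hcon)), Set.diff_singleton_eq_self
      (fun hcon => hin hcon), add_zero]

open scoped Classical in
theorem count_step {c : Set G} (hc : IsConjClass c) (h : m ≤ n) (w₁ w₂ : WP G m)
    (y : WP G (n+1)) :
    (cycleCount ((emb (h.trans (Nat.le_succ n)) w₂)⁻¹ * y
        * emb (h.trans (Nat.le_succ n)) w₁) c : ℤ) - cycleCount y c
      = (cycleCount ((emb h w₂)⁻¹ * proj y * emb h w₁) c : ℤ) - cycleCount (proj y) c := by
  set z := (emb (h.trans (Nat.le_succ n)) w₂)⁻¹ * y * emb (h.trans (Nat.le_succ n)) w₁ with hzdef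
  have hz : proj z = (emb h w₂)⁻¹ * proj y * emb h w₁ := proj_conj h w₁ w₂ y
  have hB1 := cycleCount_proj hc z
  have hB2 := cycleCount_proj hc y
  have hiff := conj_right_last y (emb (h.trans (Nat.le_succ n)) w₂)
    (emb (h.trans (Nat.le_succ n)) w₁) (emb_right_last h w₂) (emb_right_last h w₁)
  have hind : (if z.right (Fin.last n) = Fin.last n ∧ z.left (Fin.last n) ∈ c then 1 else 0)
      = (if y.right (Fin.last n) = Fin.last n ∧ y.left (Fin.last n) ∈ c then 1 else 0) := by
    by_cases hy : y.right (Fin.last n) = Fin.last n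
    · have hzr : z.right (Fin.last n) = Fin.last n := hiff.mpr hy
      have hzl : z.left (Fin.last n) = y.left (Fin.last n) :=
        conj_left_last y _ _ (emb_right_last h w₂) (emb_left_last h w₂)
          (emb_left_last h w₁) hy
      simp [hzr, hzl, hy]
    · have hzr : ¬ z.right (Fin.last n) = Fin.last n := fun hh => hy (hiff.mp hh)
      simp [hzr, hy]
  rw [hz] at hB1
  rw [hB1, hB2, hind]
  push_cast
  ring

end WP
end WreathPaper

namespace WreathPaper

open WP in
/-- For a `G`-virtual permutation `x` and `w₁, w₂ ∈ G ≀ S(m)`, the difference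
`[ι_{m,n}(w₂)⁻¹ · xₙ · ι_{m,n}(w₁)]_{c_l} − [xₙ]_{c_l}` does not depend on `n ≥ m`:
this defines the fundamental cocycles `C_l(x, (w₁,w₂))`. -/
theorem cocycle_well_defined {G : Type*} [Group G] {k : ℕ} (c : Fin k → Set G)
    (hconj : ∀ l, IsConjClass (c l)) (hpart : ∀ g : G, ∃! l, g ∈ c l)
    (x : (n : ℕ) → WP G n) (hx : ∀ n : ℕ, proj (x (n + 1)) = x n)
    (m : ℕ) (hm : 1 ≤ m) (w₁ w₂ : WP G m) (l : Fin k)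
    (n n' : ℕ) (hn : m ≤ n) (hn' : m ≤ n') :
    (cycleCount ((emb hn w₂)⁻¹ * x n * emb hn w₁) (c l) : ℤ)
        - (cycleCount (x n) (c l) : ℤ)
      = (cycleCount ((emb hn' w₂)⁻¹ * x n' * emb hn' w₁) (c l) : ℤ)
        - (cycleCount (x n') (c l) : ℤ) := by
  have key : ∀ N (hN : m ≤ N),
      (cycleCount ((emb hN w₂)⁻¹ * x N * emb hN w₁) (c l) : ℤ)
          - (cycleCount (x N) (c l) : ℤ)
        = (cycleCount ((emb (le_refl m) w₂)⁻¹ * x m * emb (le_refl m) w₁) (c l) : ℤ)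
          - (cycleCount (x m) (c l) : ℤ) := by
    intro N hN
    induction N, hN using Nat.le_induction with
    | base => rfl
    | succ N hN ih =>
      have hstep := count_step (hconj l) hN w₁ w₂ (x (N+1))
      rw [hx N] at hstep
      exact hstep.trans ih
  rw [key n hn, key n' hn']

end WreathPaper
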